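/- Let n ≥ 2 and let f : ℝ → ℝ be twice continuously differentiable with f(t) > 0 and |f'(t)| < 1 for all t, satisfying f''(t)/(1 - f'(t)²)^{3/2} + (n-1)/( f(t)·(1 - f'(t)²)^{1/2} ) = n for all t ∈ ℝ. Define u : ℝⁿ → ℝ by u(x) = √( f(x₁)² + |x̄|² ). Then u is spacelike, i.e. |Du(x)| < 1 for all x ∈ ℝⁿ, and u satisfies the constant mean curvature equation div( Du/√(1 - |Du|²) ) = n on all of ℝⁿ. -/

import Mathlib

open Filter Real

/-- The divergence of a vector field `W` on `ℝⁿ`: `div W x = Σᵢ ∂ᵢ Wᵢ (x)`. -/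
noncomputable def divg (n : ℕ) (W : EuclideanSpace ℝ (Fin n) → EuclideanSpace ℝ (Fin n))
    (x : EuclideanSpace ℝ (Fin n)) : ℝ :=
  ∑ i : Fin n, fderiv ℝ (fun z => W z i) x (EuclideanSpace.single i 1)

/-!
With `r = f(x₁)² + |x̄|²` and `V = (f f'(x₁), x̄)` one has `Du = V / √r` and
`r - |V|² = f(x₁)² (1 - f'(x₁)²) > 0`, so `u` is spacelike and the field `Du / √(1 - |Du|²)` is
`V / (f √(1 - f'²))(x₁) = (φ(x₁), ψ(x₁) x̄)` with `φ = f' / √(1 - f'²)`, `ψ = 1 / (f √(1 - f'²))`.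
Its divergence `φ' + (n - 1) ψ = f'' / (1 - f'²)^{3/2} + (n - 1) / (f √(1 - f'²))` is `n` by
the ODE.
-/

theorem HasDerivAt.div_sqrt_one_sub_sq {g : ℝ → ℝ} {g' t : ℝ} (hg : HasDerivAt g g' t)
    (h : |g t| < 1) :
    HasDerivAt (fun s => g s / √(1 - g s ^ 2)) (g' / (1 - g t ^ 2) ^ ((3 : ℝ) / 2)) t := by
  have hq : 0 < 1 - g t ^ 2 := sub_pos.mpr ((sq_lt_one_iff_abs_lt_one _).mpr h)
  have hsqrt : √(1 - g t ^ 2) ≠ 0 := (sqrt_pos.mpr hq).ne'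
  refine (hg.div (((hg.fun_pow 2).const_sub 1).sqrt hq.ne') hsqrt).congr_deriv ?_
  rw [show (3 : ℝ) / 2 = 1 + 1 / 2 by norm_num, rpow_add hq, rpow_one, ← sqrt_eq_rpow]
  field_simp
  rw [sq_sqrt hq.le]
  ring

section Coordinates

variable {ι : Type*} [Fintype ι] {x : EuclideanSpace ℝ ι} {a : ι}

theorem hasFDerivAt_comp_apply {φ : ℝ → ℝ} {φ' : ℝ} (hφ : HasDerivAt φ φ' (x a)) :
    HasFDerivAt (fun z : EuclideanSpace ℝ ι => φ (z a)) (φ' • EuclideanSpace.proj (𝕜 := ℝ) a) x :=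
  hφ.comp_hasFDerivAt (f := fun z : EuclideanSpace ℝ ι => z a) x
    (EuclideanSpace.proj (𝕜 := ℝ) a).hasFDerivAt

variable [DecidableEq ι]

theorem fderiv_comp_apply_single_self {φ : ℝ → ℝ} {φ' : ℝ} (hφ : HasDerivAt φ φ' (x a)) :
    fderiv ℝ (fun z : EuclideanSpace ℝ ι => φ (z a)) x (EuclideanSpace.single a 1) = φ' := by
  simp [(hasFDerivAt_comp_apply hφ).fderiv]

theorem fderiv_mul_comp_apply_single_of_ne {ψ : ℝ → ℝ} {i : ι} (hi : i ≠ a)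
    (hψ : DifferentiableAt ℝ ψ (x a)) :
    fderiv ℝ (fun z : EuclideanSpace ℝ ι => z i * ψ (z a)) x (EuclideanSpace.single i 1) =
      ψ (x a) := by
  have hproj : HasFDerivAt (fun z : EuclideanSpace ℝ ι => z i) (EuclideanSpace.proj (𝕜 := ℝ) i) x :=
    (EuclideanSpace.proj (𝕜 := ℝ) i).hasFDerivAt (x := x)
  rw [(hproj.fun_mul (hasFDerivAt_comp_apply hψ.hasDerivAt)).fderiv]
  simp [hi.symm]

end Coordinates

theorem divg_eq_of_apply {n : ℕ} [NeZero n]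
    {W : EuclideanSpace ℝ (Fin n) → EuclideanSpace ℝ (Fin n)} {φ ψ : ℝ → ℝ} {φ' : ℝ}
    {x : EuclideanSpace ℝ (Fin n)} (hW₀ : ∀ z, W z 0 = φ (z 0))
    (hW : ∀ z, ∀ i ≠ 0, W z i = z i * ψ (z 0))
    (hφ : HasDerivAt φ φ' (x 0)) (hψ : DifferentiableAt ℝ ψ (x 0)) :
    divg n W x = φ' + (n - 1) * ψ (x 0) := by
  have hcoord : ∀ i ∈ Finset.univ.erase 0,
      fderiv ℝ (fun z => W z i) x (EuclideanSpace.single i 1) = ψ (x 0) := by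
    intro i hi
    have hi₀ := Finset.ne_of_mem_erase hi
    simp only [hW _ i hi₀]
    exact fderiv_mul_comp_apply_single_of_ne hi₀ hψ
  rw [divg, ← Finset.add_sum_erase _ _ (Finset.mem_univ 0), Finset.sum_congr rfl hcoord]
  simp only [hW₀]
  rw [fderiv_comp_apply_single_self hφ, Finset.sum_const,
    Finset.card_erase_of_mem (Finset.mem_univ _), Finset.card_univ, Fintype.card_fin,
    nsmul_eq_mul, Nat.cast_pred (Nat.pos_of_neZero n)]

namespace Semitrough

variable {ι : Type*} [DecidableEq ι] (f : ℝ → ℝ) (a : ι)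

/-- `(f(x₁) f'(x₁), x̄)` with `x₁ = x a`, half the gradient of `radicand f a`. -/
noncomputable def halfGrad (x : EuclideanSpace ℝ ι) : EuclideanSpace ℝ ι :=
  x + (f (x a) * deriv f (x a) - x a) • EuclideanSpace.single a 1

variable {f a} {x : EuclideanSpace ℝ ι}

theorem halfGrad_apply_self : halfGrad f a x a = f (x a) * deriv f (x a) := by
  simp [halfGrad]

theorem halfGrad_apply_of_ne {i : ι} (hi : i ≠ a) : halfGrad f a x i = x i := by
  simp [halfGrad, hi]

variable [Fintype ι]

variable (f a) in
def radicand (x : EuclideanSpace ℝ ι) : ℝ :=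
  f (x a) ^ 2 + ∑ i ∈ Finset.univ.erase a, x i ^ 2

theorem radicand_eq : radicand f a x = ‖x‖ ^ 2 - x a ^ 2 + f (x a) ^ 2 := by
  simp only [radicand, EuclideanSpace.norm_sq_eq, Real.norm_eq_abs, sq_abs,
    Finset.sum_erase_eq_sub (Finset.mem_univ a)]
  ring

theorem radicand_pos (hf : f (x a) ≠ 0) : 0 < radicand f a x := by
  unfold radicand
  positivity

theorem norm_sq_halfGrad :
    ‖halfGrad f a x‖ ^ 2 = ‖x‖ ^ 2 - x a ^ 2 + (f (x a) * deriv f (x a)) ^ 2 := by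
  rw [halfGrad, norm_add_sq_real, inner_smul_right, EuclideanSpace.inner_single_right,
    norm_smul]
  simp only [ringHom_apply, one_mul, norm_eq_abs, PiLp.norm_single, norm_one, mul_one, sq_abs]
  ring

theorem radicand_sub_norm_sq_halfGrad :
    radicand f a x - ‖halfGrad f a x‖ ^ 2 = f (x a) ^ 2 * (1 - deriv f (x a) ^ 2) := by
  rw [radicand_eq, norm_sq_halfGrad]
  ring

theorem hasGradientAt_sqrt_radicand (hf : DifferentiableAt ℝ f (x a)) (hx : radicand f a x ≠ 0) :
    HasGradientAt (fun z => √(radicand f a z)) ((√(radicand f a x))⁻¹ • halfGrad f a x) x := by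
  have hr : radicand f a = fun z => ‖z‖ ^ 2 + (f (z a) ^ 2 - z a ^ 2) :=
    funext fun z => by rw [radicand_eq]; ring
  rw [hasGradientAt_iff_hasFDerivAt, hr]
  refine (((hasStrictFDerivAt_norm_sq x).hasFDerivAt.fun_add (hasFDerivAt_comp_apply
    ((hf.hasDerivAt.fun_pow 2).fun_sub (hasDerivAt_pow 2 (x a))))).sqrt ?_).congr_fderiv ?_
  · simpa [hr] using hx
  ext w
  simp only [one_div, mul_inv_rev, Nat.cast_ofNat, Nat.add_one_sub_one, pow_one, smul_add,
    add_apply, smul_apply, coe_innerSL_apply, nsmul_eq_mul, smul_eq_mul, PiLp.proj_apply, halfGrad,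
    map_add, map_smul, InnerProductSpace.toDual_apply_apply, EuclideanSpace.inner_single_left,
    ringHom_apply, one_mul]
  ring

theorem one_sub_norm_sq_gradient (hx : 0 < radicand f a x) :
    1 - ‖(√(radicand f a x))⁻¹ • halfGrad f a x‖ ^ 2 =
      f (x a) ^ 2 * (1 - deriv f (x a) ^ 2) / radicand f a x := by
  rw [← radicand_sub_norm_sq_halfGrad, norm_smul, mul_pow, norm_inv, norm_of_nonneg (sqrt_nonneg _),
    inv_pow, sq_sqrt hx.le]
  field_simp

theorem norm_gradient_lt_one (hf : f (x a) ≠ 0) (hf' : |deriv f (x a)| < 1) :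
    ‖(√(radicand f a x))⁻¹ • halfGrad f a x‖ < 1 := by
  have hx := radicand_pos hf
  have hq : 0 < 1 - deriv f (x a) ^ 2 := sub_pos.mpr ((sq_lt_one_iff_abs_lt_one _).mpr hf')
  have h : 0 < 1 - ‖(√(radicand f a x))⁻¹ • halfGrad f a x‖ ^ 2 := by
    rw [one_sub_norm_sq_gradient hx]
    positivity
  exact (sq_lt_one_iff₀ (norm_nonneg _)).mp (sub_pos.mp h)

theorem cmcField_eq_smul_halfGrad (hf : 0 < f (x a)) (hf' : |deriv f (x a)| < 1) :
    (√(1 - ‖(√(radicand f a x))⁻¹ • halfGrad f a x‖ ^ 2))⁻¹ •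
        ((√(radicand f a x))⁻¹ • halfGrad f a x) =
      (f (x a) * √(1 - deriv f (x a) ^ 2))⁻¹ • halfGrad f a x := by
  have hx := radicand_pos hf.ne'
  have hq : 0 < 1 - deriv f (x a) ^ 2 := sub_pos.mpr ((sq_lt_one_iff_abs_lt_one _).mpr hf')
  rw [one_sub_norm_sq_gradient hx, smul_smul, sqrt_div' _ hx.le, sqrt_mul' _ hq.le,
    sqrt_sq hf.le]
  congr 1
  have hr := sqrt_pos.mpr hx
  field_simp

end Semitrough

open Semitrough in
theorem semitrough_solves_cmc_general (n : ℕ) [NeZero n]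
    (f : ℝ → ℝ) (hf : ContDiff ℝ 2 f)
    (hfpos : ∀ t : ℝ, 0 < f t)
    (hfsp : ∀ t : ℝ, |deriv f t| < 1)
    (hODE : ∀ t : ℝ, deriv (deriv f) t / (1 - deriv f t ^ 2) ^ ((3 : ℝ) / 2) +
        ((n : ℝ) - 1) / (f t * (1 - deriv f t ^ 2) ^ ((1 : ℝ) / 2)) = n) :
    (∀ x : EuclideanSpace ℝ (Fin n),
      ‖gradient (fun z : EuclideanSpace ℝ (Fin n) =>
          Real.sqrt (f (z 0) ^ 2 + ∑ i ∈ Finset.univ.erase (0 : Fin n), z i ^ 2)) x‖ < 1) ∧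
    ∀ x : EuclideanSpace ℝ (Fin n),
      divg n (fun z =>
          (Real.sqrt (1 - ‖gradient (fun w : EuclideanSpace ℝ (Fin n) =>
              Real.sqrt (f (w 0) ^ 2 + ∑ i ∈ Finset.univ.erase (0 : Fin n), w i ^ 2)) z‖ ^ 2))⁻¹ •
            gradient (fun w : EuclideanSpace ℝ (Fin n) =>
              Real.sqrt (f (w 0) ^ 2 + ∑ i ∈ Finset.univ.erase (0 : Fin n), w i ^ 2)) z) x = n := by
  have hf₁ : Differentiable ℝ f := hf.differentiable (by norm_num)
  have hf₂ : Differentiable ℝ (deriv f) := (hf.deriv' (n := 1)).differentiable one_ne_zero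
  have hgrad : ∀ z : EuclideanSpace ℝ (Fin n), gradient (fun w : EuclideanSpace ℝ (Fin n) =>
      √(f (w 0) ^ 2 + ∑ i ∈ Finset.univ.erase (0 : Fin n), w i ^ 2)) z =
        (√(radicand f 0 z))⁻¹ • halfGrad f 0 z :=
    fun z => (hasGradientAt_sqrt_radicand (hf₁ _) (radicand_pos (hfpos _).ne').ne').gradient
  simp only [hgrad, cmcField_eq_smul_halfGrad (hfpos _) (hfsp _)]
  refine ⟨fun x => norm_gradient_lt_one (hfpos _).ne' (hfsp _), fun x => ?_⟩
  have hq : 0 < 1 - deriv f (x 0) ^ 2 := sub_pos.mpr ((sq_lt_one_iff_abs_lt_one _).mpr (hfsp _))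
  have hψ : DifferentiableAt ℝ (fun t => (f t * √(1 - deriv f t ^ 2))⁻¹) (x 0) :=
    ((hf₁ _).mul (((hf₂ _).pow 2).const_sub 1 |>.sqrt hq.ne')).inv
      (mul_pos (hfpos _) (sqrt_pos.mpr hq)).ne'
  rw [divg_eq_of_apply (φ := fun t => deriv f t / √(1 - deriv f t ^ 2)) (fun z => ?_)
    (fun z i hi => ?_) ((hf₂ _).hasDerivAt.div_sqrt_one_sub_sq (hfsp _)) hψ]
  · have hODE₀ := hODE (x 0)
    rwa [← sqrt_eq_rpow, div_eq_mul_inv _ (f (x 0) * _)] at hODE₀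
  · rw [PiLp.smul_apply, halfGrad_apply_self, smul_eq_mul]
    have hf₀ := (hfpos (z 0)).ne'
    field_simp
  · rw [PiLp.smul_apply, halfGrad_apply_of_ne hi, smul_eq_mul, mul_comm]

/-- If `f` is `C²` with `f > 0`, `|f'| < 1`, and satisfies the ODE
`f''/(1-f'²)^{3/2} + (n-1)/(f (1-f'²)^{1/2}) = n`, then `u(x) = √(f(x₁)² + |x̄|²)` is
spacelike and solves the constant mean curvature equation `div(Du/√(1-|Du|²)) = n`. -/
theorem semitrough_solves_cmc (n : ℕ) [NeZero n] (hn : 2 ≤ n)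
    (f : ℝ → ℝ) (hf : ContDiff ℝ 2 f)
    (hfpos : ∀ t : ℝ, 0 < f t)
    (hfsp : ∀ t : ℝ, |deriv f t| < 1)
    (hODE : ∀ t : ℝ, deriv (deriv f) t / (1 - deriv f t ^ 2) ^ ((3 : ℝ) / 2) +
        ((n : ℝ) - 1) / (f t * (1 - deriv f t ^ 2) ^ ((1 : ℝ) / 2)) = n) :
    (∀ x : EuclideanSpace ℝ (Fin n),
      ‖gradient (fun z : EuclideanSpace ℝ (Fin n) =>
          Real.sqrt (f (z 0) ^ 2 + ∑ i ∈ Finset.univ.erase (0 : Fin n), z i ^ 2)) x‖ < 1) ∧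
    ∀ x : EuclideanSpace ℝ (Fin n),
      divg n (fun z =>
          (Real.sqrt (1 - ‖gradient (fun w : EuclideanSpace ℝ (Fin n) =>
              Real.sqrt (f (w 0) ^ 2 + ∑ i ∈ Finset.univ.erase (0 : Fin n), w i ^ 2)) z‖ ^ 2))⁻¹ •
            gradient (fun w : EuclideanSpace ℝ (Fin n) =>
              Real.sqrt (f (w 0) ^ 2 + ∑ i ∈ Finset.univ.erase (0 : Fin n), w i ^ 2)) z) x = n :=
  semitrough_solves_cmc_general n f hf hfpos hfsp hODE
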